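/- arXiv:2310.07483 — 4 statements merged into one kernel-verified Lean document; each statement's English description precedes it below -/
import Mathlib

section
/- Let s ∈ (1,2], C ≥ 1 and ε₀ ≥ 0. Suppose given E : [0,s] × [1,∞) → [0,∞) with u ↦ E(p,u) measurable for each p, and B, F : [0,s] × {(u₁,u₂) : 1 ≤ u₁ ≤ u₂} → [0,∞), such that: (i) for every p ∈ [1,s] and 1 ≤ u₁ ≤ u₂, B(p,u₁,u₂) ≥ ∫_{u₁}^{u₂} E(p−1,u) du; (ii) for all p₁, p₂ ∈ [0,s], θ ∈ [0,1] and u ≥ 1, E(θp₁+(1−θ)p₂, u) ≤ E(p₁,u)^θ · E(p₂,u)^{1−θ}; (iii) for every p ∈ [0,s] and all 1 ≤ u₁ ≤ u₂, p·B(p,u₁,u₂) + sup_{u∈[u₁,u₂]} E(p,u) + F(p,u₁,u₂) ≤ C·(E(p,u₁) + ε₀²·u₁^{p−s}); (iv) E(p,1) ≤ C·ε₀² for every p ∈ [0,s]. Then there exists a constant C′ depending only on s and C such that for all p ∈ [0,s] and all 1 ≤ u₁ ≤ u₂, sup_{u∈[u₁,u₂]} E(p,u) + F(p,u₁,u₂)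 ≤ C′·ε₀²·u₁^{p−s}. -/
/-!
Proof idea: the energy inequality (iii) started at `u₁ = 1` and (iv) bound every `E p` by
`ε₀²`. If `E p` decays like `u^(p-s)`, then (iii) bounds the bulk `B p (u/2) u`, hence by (i)
the average of `E (p-1)` over `[u/2, u]`; at a point `w` where `E (p-1)` is at most its average,
(iii) started at `w` gives decay `u^(p-1-s)` for `E (p-1)`. Starting from `p = s` this reaches
`p = s - 1`, log-convexity (ii) between `s - 1` and `s` gives `p = 1`, a second dyadic step gives
`p = 0`, and interpolating between `0` and `s` gives every `p ∈ [0, s]`.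
-/

open MeasureTheory Set

lemma exists_mem_Icc_le_div_of_lintegral_le {f : ℝ → ℝ} (hf : Measurable f) {a b M : ℝ}
    (hab : a < b) (hM : 0 ≤ M)
    (h : ∫⁻ u in Icc a b, ENNReal.ofReal (f u) ≤ ENNReal.ofReal M) :
    ∃ u ∈ Icc a b, f u ≤ M / (b - a) := by
  have hba : 0 < b - a := sub_pos.2 hab
  obtain ⟨u, hu, hle⟩ := exists_le_setLAverage (μ := volume) (s := Icc a b)
    (by simp [Real.volume_Icc, hab]) (by simp [Real.volume_Icc]) hf.ennreal_ofReal.aemeasurable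
  refine ⟨u, hu, (ENNReal.ofReal_le_ofReal_iff (by positivity)).1 ?_⟩
  calc ENNReal.ofReal (f u) ≤ ⨍⁻ v in Icc a b, ENNReal.ofReal (f v) ∂volume := hle
    _ = (∫⁻ v in Icc a b, ENNReal.ofReal (f v)) / ENNReal.ofReal (b - a) := by
      rw [setLAverage_eq, Real.volume_Icc]
    _ ≤ ENNReal.ofReal M / ENNReal.ofReal (b - a) := by gcongr
    _ = ENNReal.ofReal (M / (b - a)) := (ENNReal.ofReal_div_of_pos hba).symm

lemma rpow_mul_rpow_le_mul_rpow {x y A u α β θ : ℝ} (hx : 0 ≤ x) (hy : 0 ≤ y) (hA : 0 ≤ A)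
    (hu : 0 < u) (hxA : x ≤ A * u ^ α) (hyA : y ≤ A * u ^ β) (hθ : θ ∈ Icc (0 : ℝ) 1) :
    x ^ θ * y ^ (1 - θ) ≤ A * u ^ (θ * α + (1 - θ) * β) := by
  obtain ⟨hθ₀, hθ₁⟩ := hθ
  have hθ₁' : 0 ≤ 1 - θ := sub_nonneg.2 hθ₁
  calc x ^ θ * y ^ (1 - θ) ≤ (A * u ^ α) ^ θ * (A * u ^ β) ^ (1 - θ) := by
        gcongr
    _ = A ^ (θ + (1 - θ)) * u ^ (θ * α + (1 - θ) * β) := by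
        rw [Real.mul_rpow hA (by positivity), Real.mul_rpow hA (by positivity),
          ← Real.rpow_mul hu.le, ← Real.rpow_mul hu.le, Real.rpow_add' hA (by norm_num),
          Real.rpow_add hu]
        ring_nf
    _ = A * u ^ (θ * α + (1 - θ) * β) := by rw [add_sub_cancel, Real.rpow_one]

lemma rpow_div_two_le {u q : ℝ} (hu : 0 < u) (hq : -2 ≤ q) : (u / 2) ^ q ≤ 4 * u ^ q := by
  have h2q : (2 : ℝ) ^ (-q) ≤ 4 := by
    calc (2 : ℝ) ^ (-q) ≤ 2 ^ (2 : ℝ) :=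
          Real.rpow_le_rpow_of_exponent_le (by norm_num) (by linarith)
      _ = 4 := by norm_num
  rw [Real.div_rpow hu.le zero_le_two, div_eq_mul_inv, ← Real.rpow_neg zero_le_two, mul_comm]
  gcongr

structure RpHierarchy (s C ε₀ : ℝ) (E : ℝ → ℝ → ℝ) (B F : ℝ → ℝ → ℝ → ℝ) : Prop where
  energy_nonneg : ∀ p ∈ Icc 0 s, ∀ u, 1 ≤ u → 0 ≤ E p u
  measurable_energy : ∀ p ∈ Icc 0 s, Measurable (E p)
  bulk_nonneg : ∀ p ∈ Icc 0 s, ∀ u₁ u₂, 1 ≤ u₁ → u₁ ≤ u₂ → 0 ≤ B p u₁ u₂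
  flux_nonneg : ∀ p ∈ Icc 0 s, ∀ u₁ u₂, 1 ≤ u₁ → u₁ ≤ u₂ → 0 ≤ F p u₁ u₂
  lintegral_le_bulk : ∀ p ∈ Icc 1 s, ∀ u₁ u₂, 1 ≤ u₁ → u₁ ≤ u₂ →
    ∫⁻ u in Icc u₁ u₂, ENNReal.ofReal (E (p - 1) u) ≤ ENNReal.ofReal (B p u₁ u₂)
  le_rpow_mul_rpow : ∀ p₁ ∈ Icc 0 s, ∀ p₂ ∈ Icc 0 s, ∀ θ ∈ Icc (0 : ℝ) 1, ∀ u, 1 ≤ u →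
    E (θ * p₁ + (1 - θ) * p₂) u ≤ E p₁ u ^ θ * E p₂ u ^ (1 - θ)
  energy_inequality : ∀ p ∈ Icc 0 s, ∀ u₁ u₂, 1 ≤ u₁ → u₁ ≤ u₂ → ∀ u ∈ Icc u₁ u₂,
    p * B p u₁ u₂ + E p u + F p u₁ u₂ ≤ C * (E p u₁ + ε₀ ^ 2 * u₁ ^ (p - s))
  initial_le : ∀ p ∈ Icc 0 s, E p 1 ≤ C * ε₀ ^ 2

def HasEnergyDecay (E : ℝ → ℝ → ℝ) (s ε₀ A p : ℝ) : Prop :=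
  ∀ u, 1 ≤ u → E p u ≤ A * ε₀ ^ 2 * u ^ (p - s)

lemma HasEnergyDecay.mono {E : ℝ → ℝ → ℝ} {s ε₀ A A' p : ℝ} (hd : HasEnergyDecay E s ε₀ A p)
    (hAA' : A ≤ A') : HasEnergyDecay E s ε₀ A' p := fun u hu =>
  (hd u hu).trans (by gcongr)

/-- The decay constant after one dyadic step `p ↦ p - 1`; the `4` bounds `2 ^ (s + 1 - p)`. -/
def dyadicConst (C A : ℝ) : ℝ := 4 * C * (C * (A + 1) + 1)

lemma le_dyadicConst {C A : ℝ} (hC : 1 ≤ C) (hA : 0 ≤ A) : A ≤ dyadicConst C A := by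
  have hCC : 1 ≤ C * C := one_le_mul_of_one_le_of_one_le hC hC
  unfold dyadicConst
  nlinarith [mul_le_mul_of_nonneg_right hCC hA]

def decayConst (C : ℝ) : ℝ := dyadicConst C (dyadicConst C (C * (C + 1)))

lemma decayConst_nonneg {C : ℝ} (hC : 1 ≤ C) : 0 ≤ decayConst C := by
  have hK₀ : 0 ≤ C * (C + 1) := by nlinarith
  have hK₁ := hK₀.trans (le_dyadicConst hC hK₀)
  exact hK₁.trans (le_dyadicConst hC hK₁)

namespace RpHierarchy

variable {s C ε₀ p u₁ u₂ u : ℝ} {E : ℝ → ℝ → ℝ} {B F : ℝ → ℝ → ℝ → ℝ}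

lemma energy_add_flux_le (h : RpHierarchy s C ε₀ E B F) (hp : p ∈ Icc 0 s) (hu₁ : 1 ≤ u₁)
    (hu : u ∈ Icc u₁ u₂) : E p u + F p u₁ u₂ ≤ C * (E p u₁ + ε₀ ^ 2 * u₁ ^ (p - s)) := by
  have h12 := hu.1.trans hu.2
  have := h.energy_inequality p hp u₁ u₂ hu₁ h12 u hu
  nlinarith [mul_nonneg hp.1 (h.bulk_nonneg p hp u₁ u₂ hu₁ h12)]

lemma energy_le (h : RpHierarchy s C ε₀ E B F) (hp : p ∈ Icc 0 s) (hu₁ : 1 ≤ u₁)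
    (hu : u₁ ≤ u) : E p u ≤ C * (E p u₁ + ε₀ ^ 2 * u₁ ^ (p - s)) := by
  have := h.energy_add_flux_le hp hu₁ ⟨hu, le_rfl⟩
  linarith [h.flux_nonneg p hp u₁ u hu₁ hu]

lemma bulk_le (h : RpHierarchy s C ε₀ E B F) (hp : p ∈ Icc 1 s) (hu₁ : 1 ≤ u₁)
    (h12 : u₁ ≤ u₂) : B p u₁ u₂ ≤ C * (E p u₁ + ε₀ ^ 2 * u₁ ^ (p - s)) := by
  have hp₀ : p ∈ Icc 0 s := ⟨zero_le_one.trans hp.1, hp.2⟩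
  have hB := h.bulk_nonneg p hp₀ u₁ u₂ hu₁ h12
  have := h.energy_inequality p hp₀ u₁ u₂ hu₁ h12 u₁ ⟨le_rfl, h12⟩
  nlinarith [mul_nonneg (sub_nonneg.2 hp.1) hB, h.energy_nonneg p hp₀ u₁ hu₁,
    h.flux_nonneg p hp₀ u₁ u₂ hu₁ h12]

lemma energy_le_uniform (h : RpHierarchy s C ε₀ E B F) (hC : 0 ≤ C) (hp : p ∈ Icc 0 s)
    (hu : 1 ≤ u) : E p u ≤ C * (C + 1) * ε₀ ^ 2 := by
  have := h.energy_le hp le_rfl hu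
  rw [Real.one_rpow] at this
  nlinarith [h.initial_le p hp]

lemma exists_energy_sub_one_le (h : RpHierarchy s C ε₀ E B F) (hp : p ∈ Icc 1 s)
    (hu₁ : 1 ≤ u₁) (h12 : u₁ < u₂) :
    ∃ w ∈ Icc u₁ u₂, E (p - 1) w ≤ C * (E p u₁ + ε₀ ^ 2 * u₁ ^ (p - s)) / (u₂ - u₁) := by
  have hp₀ : p - 1 ∈ Icc 0 s := ⟨by linarith [hp.1], by linarith [hp.2]⟩
  have hp₁ : p ∈ Icc 0 s := ⟨zero_le_one.trans hp.1, hp.2⟩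
  have hB := h.bulk_le hp hu₁ h12.le
  refine exists_mem_Icc_le_div_of_lintegral_le (h.measurable_energy _ hp₀) h12
    ((h.bulk_nonneg p hp₁ u₁ u₂ hu₁ h12.le).trans hB) ?_
  exact (h.lintegral_le_bulk p hp u₁ u₂ hu₁ h12.le).trans (ENNReal.ofReal_le_ofReal hB)

lemma hasEnergyDecay_self (h : RpHierarchy s C ε₀ E B F) (hC : 0 ≤ C) (hs : 0 ≤ s) :
    HasEnergyDecay E s ε₀ (C * (C + 1)) s := fun u hu => by
  simpa using h.energy_le_uniform hC ⟨hs, le_rfl⟩ hu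

lemma energy_sub_one_le_of_two_le (h : RpHierarchy s C ε₀ E B F) (hC : 0 ≤ C) {A : ℝ}
    (hp : p ∈ Icc 1 s) (hd : HasEnergyDecay E s ε₀ A p) (hu : 2 ≤ u) :
    E (p - 1) u ≤ C * (C * (A + 1) + 1) * ε₀ ^ 2 * (u / 2) ^ (p - 1 - s) := by
  have hp₀ : p - 1 ∈ Icc 0 s := ⟨by linarith [hp.1], by linarith [hp.2]⟩
  have hhalf : 1 ≤ u / 2 := by linarith
  obtain ⟨w, hw, hEw⟩ := h.exists_energy_sub_one_le hp hhalf (by linarith : u / 2 < u)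
  have hEw' : E (p - 1) w ≤ C * (A + 1) * ε₀ ^ 2 * (u / 2) ^ (p - 1 - s) := by
    calc E (p - 1) w ≤ C * (E p (u / 2) + ε₀ ^ 2 * (u / 2) ^ (p - s)) / (u - u / 2) := hEw
      _ ≤ C * (A * ε₀ ^ 2 * (u / 2) ^ (p - s) + ε₀ ^ 2 * (u / 2) ^ (p - s)) / (u / 2) := by
          rw [sub_half]; gcongr; exact hd _ hhalf
      _ = C * (A + 1) * ε₀ ^ 2 * ((u / 2) ^ (p - s) / (u / 2)) := by ring
      _ = C * (A + 1) * ε₀ ^ 2 * (u / 2) ^ (p - 1 - s) := by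
          rw [← Real.rpow_sub_one (by positivity)]; ring_nf
  have hw_pow : w ^ (p - 1 - s) ≤ (u / 2) ^ (p - 1 - s) :=
    Real.rpow_le_rpow_of_nonpos (by positivity) hw.1 (by linarith [hp.2])
  calc E (p - 1) u ≤ C * (E (p - 1) w + ε₀ ^ 2 * w ^ (p - 1 - s)) :=
        h.energy_le hp₀ (hhalf.trans hw.1) hw.2
    _ ≤ C * (C * (A + 1) * ε₀ ^ 2 * (u / 2) ^ (p - 1 - s) + ε₀ ^ 2 * (u / 2) ^ (p - 1 - s)) := by
        gcongr
    _ = C * (C * (A + 1) + 1) * ε₀ ^ 2 * (u / 2) ^ (p - 1 - s) := by ring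

lemma hasEnergyDecay_sub_one (h : RpHierarchy s C ε₀ E B F) (hs : s ≤ 2) (hC : 0 ≤ C)
    {A : ℝ} (hA : 0 ≤ A) (hp : p ∈ Icc 1 s) (hd : HasEnergyDecay E s ε₀ A p) :
    HasEnergyDecay E s ε₀ (dyadicConst C A) (p - 1) := by
  intro u hu
  have hu₀ : 0 < u := zero_lt_one.trans_le hu
  have hp₀ : p - 1 ∈ Icc 0 s := ⟨by linarith [hp.1], by linarith [hp.2]⟩
  have key : E (p - 1) u ≤ C * (C * (A + 1) + 1) * ε₀ ^ 2 * (u / 2) ^ (p - 1 - s) := by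
    rcases le_or_gt 2 u with hu2 | hu2
    · exact h.energy_sub_one_le_of_two_le hC hp hd hu2
    have hone : 1 ≤ (u / 2) ^ (p - 1 - s) :=
      Real.one_le_rpow_of_pos_of_le_one_of_nonpos (by positivity) (by linarith)
        (by linarith [hp.2])
    calc E (p - 1) u ≤ C * (C + 1) * ε₀ ^ 2 := h.energy_le_uniform hC hp₀ hu
      _ ≤ C * (C * (A + 1) + 1) * ε₀ ^ 2 * 1 := by
          rw [mul_one]; gcongr; nlinarith
      _ ≤ C * (C * (A + 1) + 1) * ε₀ ^ 2 * (u / 2) ^ (p - 1 - s) := by gcongr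
  calc E (p - 1) u ≤ C * (C * (A + 1) + 1) * ε₀ ^ 2 * (4 * u ^ (p - 1 - s)) := by
        refine key.trans ?_
        gcongr
        exact rpow_div_two_le hu₀ (by linarith [hp.1])
    _ = dyadicConst C A * ε₀ ^ 2 * u ^ (p - 1 - s) := by unfold dyadicConst; ring

lemma hasEnergyDecay_interpolate (h : RpHierarchy s C ε₀ E B F) {p₁ p₂ θ A : ℝ}
    (hp₁ : p₁ ∈ Icc 0 s) (hp₂ : p₂ ∈ Icc 0 s) (hθ : θ ∈ Icc (0 : ℝ) 1) (hA : 0 ≤ A)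
    (hd₁ : HasEnergyDecay E s ε₀ A p₁) (hd₂ : HasEnergyDecay E s ε₀ A p₂) :
    HasEnergyDecay E s ε₀ A (θ * p₁ + (1 - θ) * p₂) := by
  intro u hu
  calc E (θ * p₁ + (1 - θ) * p₂) u ≤ E p₁ u ^ θ * E p₂ u ^ (1 - θ) :=
        h.le_rpow_mul_rpow p₁ hp₁ p₂ hp₂ θ hθ u hu
    _ ≤ A * ε₀ ^ 2 * u ^ (θ * (p₁ - s) + (1 - θ) * (p₂ - s)) :=
        rpow_mul_rpow_le_mul_rpow (h.energy_nonneg p₁ hp₁ u hu) (h.energy_nonneg p₂ hp₂ u hu)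
          (by positivity) (zero_lt_one.trans_le hu) (hd₁ u hu) (hd₂ u hu) hθ
    _ = A * ε₀ ^ 2 * u ^ (θ * p₁ + (1 - θ) * p₂ - s) := by ring_nf

lemma hasEnergyDecay (h : RpHierarchy s C ε₀ E B F) (hs₁ : 1 < s) (hs₂ : s ≤ 2) (hC : 1 ≤ C)
    (hp : p ∈ Icc 0 s) : HasEnergyDecay E s ε₀ (decayConst C) p := by
  have hC₀ : 0 ≤ C := zero_le_one.trans hC
  have hs₀ : 0 ≤ s := by linarith
  have hs_mem : s ∈ Icc 0 s := ⟨hs₀, le_rfl⟩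
  set K₀ := C * (C + 1)
  set K₁ := dyadicConst C K₀
  have hK₀ : 0 ≤ K₀ := by positivity
  have hK₀₁ : K₀ ≤ K₁ := le_dyadicConst hC hK₀
  have hK₁ : 0 ≤ K₁ := hK₀.trans hK₀₁
  have hK₀₂ : K₀ ≤ decayConst C := hK₀₁.trans (le_dyadicConst hC hK₁)
  have hd_s : HasEnergyDecay E s ε₀ K₀ s := h.hasEnergyDecay_self hC₀ hs₀
  have hd_s_sub_one : HasEnergyDecay E s ε₀ K₁ (s - 1) :=
    h.hasEnergyDecay_sub_one hs₂ hC₀ hK₀ ⟨hs₁.le, le_rfl⟩ hd_s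
  have hd_one : HasEnergyDecay E s ε₀ K₁ 1 := by
    have hd := h.hasEnergyDecay_interpolate (θ := s - 1) ⟨by linarith, by linarith⟩ hs_mem
      ⟨by linarith, by linarith⟩ hK₁ hd_s_sub_one (hd_s.mono hK₀₁)
    rwa [show (s - 1) * (s - 1) + (1 - (s - 1)) * s = 1 by ring] at hd
  have hd_zero : HasEnergyDecay E s ε₀ (decayConst C) (1 - 1) :=
    h.hasEnergyDecay_sub_one hs₂ hC₀ hK₁ ⟨le_rfl, hs₁.le⟩ hd_one
  rw [sub_self] at hd_zero
  have hd := h.hasEnergyDecay_interpolate (θ := p / s) hs_mem ⟨le_rfl, hs₀⟩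
    ⟨div_nonneg hp.1 hs₀, div_le_one_of_le₀ hp.2 hs₀⟩ (hK₀.trans hK₀₂) (hd_s.mono hK₀₂) hd_zero
  rwa [show p / s * s + (1 - p / s) * 0 = p by field_simp; ring] at hd

end RpHierarchy

/-- Abstract dyadic "mean value" lemma for `r^p`-weighted estimates in the interior
region. Given `s ∈ (1,2]`, `C ≥ 1`, `ε₀ ≥ 0`, nonnegative quantities
`E(p,u)`, `B(p,u₁,u₂)`, `F(p,u₁,u₂)` (for `p ∈ [0,s]`, `1 ≤ u₁ ≤ u₂`) such that:
(i) `B(p,u₁,u₂) ≥ ∫_{u₁}^{u₂} E(p−1,u) du` for `p ∈ [1,s]`;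
(ii) `E` is log-convex in `p`: `E(θp₁+(1−θ)p₂,u) ≤ E(p₁,u)^θ E(p₂,u)^{1−θ}`;
(iii) `p·B(p,u₁,u₂) + sup_{u∈[u₁,u₂]} E(p,u) + F(p,u₁,u₂) ≤ C(E(p,u₁) + ε₀² u₁^{p−s})`;
(iv) `E(p,1) ≤ C ε₀²`;
then there is `C'` depending only on `s` and `C` with
`sup_{u∈[u₁,u₂]} E(p,u) + F(p,u₁,u₂) ≤ C' ε₀² u₁^{p−s}` for all `p ∈ [0,s]`,
`1 ≤ u₁ ≤ u₂`. (The suprema are expressed by quantifying over `u ∈ [u₁,u₂]`.) -/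
theorem dyadic_mean_value_lemma (s C : ℝ) (hs1 : 1 < s) (hs2 : s ≤ 2) (hC : 1 ≤ C) :
    ∃ C' : ℝ, 0 < C' ∧
      ∀ (ε₀ : ℝ), 0 ≤ ε₀ →
      ∀ (E : ℝ → ℝ → ℝ) (B F : ℝ → ℝ → ℝ → ℝ),
      (∀ p ∈ Set.Icc (0:ℝ) s, ∀ u, 1 ≤ u → 0 ≤ E p u) →
      (∀ p ∈ Set.Icc (0:ℝ) s, Measurable (fun u => E p u)) →
      (∀ p ∈ Set.Icc (0:ℝ) s, ∀ u₁ u₂, 1 ≤ u₁ → u₁ ≤ u₂ →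
        0 ≤ B p u₁ u₂ ∧ 0 ≤ F p u₁ u₂) →
      -- (i) the bulk dominates the integral of the lower-weight energy
      (∀ p ∈ Set.Icc (1:ℝ) s, ∀ u₁ u₂, 1 ≤ u₁ → u₁ ≤ u₂ →
        ∫⁻ u in Set.Icc u₁ u₂, ENNReal.ofReal (E (p - 1) u)
          ≤ ENNReal.ofReal (B p u₁ u₂)) →
      -- (ii) interpolation (log-convexity in p)
      (∀ p₁ ∈ Set.Icc (0:ℝ) s, ∀ p₂ ∈ Set.Icc (0:ℝ) s, ∀ θ ∈ Set.Icc (0:ℝ) 1,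
        ∀ u, 1 ≤ u →
          E (θ * p₁ + (1 - θ) * p₂) u ≤ E p₁ u ^ θ * E p₂ u ^ (1 - θ)) →
      -- (iii) the r^p-weighted energy inequality
      (∀ p ∈ Set.Icc (0:ℝ) s, ∀ u₁ u₂, 1 ≤ u₁ → u₁ ≤ u₂ →
        ∀ u ∈ Set.Icc u₁ u₂,
          p * B p u₁ u₂ + E p u + F p u₁ u₂
            ≤ C * (E p u₁ + ε₀ ^ 2 * u₁ ^ (p - s))) →
      -- (iv) initial smallness
      (∀ p ∈ Set.Icc (0:ℝ) s, E p 1 ≤ C * ε₀ ^ 2) →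
      -- conclusion
      ∀ p ∈ Set.Icc (0:ℝ) s, ∀ u₁ u₂, 1 ≤ u₁ → u₁ ≤ u₂ →
        ∀ u ∈ Set.Icc u₁ u₂,
          E p u + F p u₁ u₂ ≤ C' * ε₀ ^ 2 * u₁ ^ (p - s) := by
  have hK := decayConst_nonneg hC
  refine ⟨C * (decayConst C + 1), by positivity, ?_⟩
  intro ε₀ _ E B F hE hEm hBF hi hii hiii hiv p hp u₁ u₂ hu₁ _ u hu
  have h : RpHierarchy s C ε₀ E B F :=
    ⟨hE, hEm, fun p hp u₁ u₂ h₁ h₂ => (hBF p hp u₁ u₂ h₁ h₂).1,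
      fun p hp u₁ u₂ h₁ h₂ => (hBF p hp u₁ u₂ h₁ h₂).2, hi, hii, hiii, hiv⟩
  calc E p u + F p u₁ u₂ ≤ C * (E p u₁ + ε₀ ^ 2 * u₁ ^ (p - s)) :=
        h.energy_add_flux_le hp hu₁ hu
    _ ≤ C * (decayConst C * ε₀ ^ 2 * u₁ ^ (p - s) + ε₀ ^ 2 * u₁ ^ (p - s)) := by
        gcongr
        exact h.hasEnergyDecay hs1 hs2 hC hp u₁ hu₁
    _ = C * (decayConst C + 1) * ε₀ ^ 2 * u₁ ^ (p - s) := by ring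
end

section
/- Let s ∈ (1,2], C ≥ 1 and ε₀ ≥ 0. Let E : [1,∞) → [0,∞) be measurable and let B, F : [0,1] × {(u₁,u₂) : 1 ≤ u₁ ≤ u₂} → [0,∞) satisfy: (a) B(p,u₁,u₂) + F(p,u₁,u₂) ≤ C·ε₀²·u₁^{p−s} for all p ∈ [0,1] and 1 ≤ u₁ ≤ u₂; (b) B(1,u₁,u₂) ≥ ∫_{u₁}^{u₂} E(u) du for all 1 ≤ u₁ ≤ u₂; (c) E(u₂) ≤ C·(E(u₁) + ε₀²·u₁^{−s}) for all 1 ≤ u₁ ≤ u₂; (d) E(1) ≤ C·ε₀². Then there exists C′ depending only on s and C such that E(u) ≤ C′·ε₀²·u^{−s} for all u ≥ 1, and consequently B(0,u₁,u₂) + sup_{u∈[u₁,u₂]} E(u) + F(0,u₁,u₂) ≤ C′·ε₀²·u₁^{−s} for all 1 ≤ u₁ ≤ u₂. -/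
/-!
Averaging the `p = 1` bound of (a), through (b), over the dyadic interval `[u/2, u]` produces a
time `v` there with `E v ≤ C ε₀² (u/2)^{-s}` (for `u ≤ 2` the time `v = 1` does, by (d)); the
propagation estimate (c) carries this bound from `v` to `u`. The `p = 0` bound of (a) then gives
the bulk and flux terms directly.
-/

open MeasureTheory Set

theorem exists_le_div_of_setLIntegral_le {α : Type*} [MeasurableSpace α] {μ : Measure α}
    {s : Set α} {f : α → ℝ} {M : ℝ} (hμ : μ s ≠ 0) (hμ₁ : μ s ≠ ⊤)
    (hf : AEMeasurable f (μ.restrict s)) (hM : 0 ≤ M)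
    (hI : ∫⁻ x in s, ENNReal.ofReal (f x) ∂μ ≤ ENNReal.ofReal M) :
    ∃ x ∈ s, f x ≤ M / μ.real s := by
  obtain ⟨x, hx, hle⟩ :=
    exists_le_setLAverage hμ hμ₁ (ENNReal.measurable_ofReal.comp_aemeasurable hf)
  refine ⟨x, hx, ?_⟩
  have hpos : 0 < μ.real s := ENNReal.toReal_pos hμ hμ₁
  rw [← ENNReal.ofReal_le_ofReal_iff (div_nonneg hM hpos.le), ENNReal.ofReal_div_of_pos hpos,
    ofReal_measureReal hμ₁]
  rw [setLAverage_eq] at hle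
  exact hle.trans (ENNReal.div_le_div_right hI _)

section DyadicDecay

variable {s C A : ℝ} {E : ℝ → ℝ}

theorem exists_energy_le_on_dyadic_interval (hs : 0 ≤ s) (hE : Measurable E)
    (hbulk : ∀ u₁ u₂, 1 ≤ u₁ → u₁ ≤ u₂ →
      ∫⁻ u in Icc u₁ u₂, ENNReal.ofReal (E u) ≤ ENNReal.ofReal (C * A * u₁ ^ (1 - s)))
    (hM : 0 ≤ C * A) (h1 : E 1 ≤ C * A) {u : ℝ} (hu : 1 ≤ u) :
    ∃ v ∈ Icc 1 u, u / 2 ≤ v ∧ E v ≤ C * A * (u / 2) ^ (-s) := by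
  rcases le_or_gt u 2 with hu2 | hu2
  · refine ⟨1, ⟨le_rfl, hu⟩, by linarith, h1.trans (le_mul_of_one_le_right hM ?_)⟩
    exact Real.one_le_rpow_of_pos_of_le_one_of_nonpos (by positivity) (by linarith) (by linarith)
  · have ha : 0 < u / 2 := by positivity
    have hvol : volume.real (Icc (u / 2) u) = u / 2 := by
      rw [Real.volume_real_Icc_of_le (by linarith)]; ring
    obtain ⟨v, hv, hEv⟩ := exists_le_div_of_setLIntegral_le (by simpa using ha) (by simp)
      hE.aemeasurable (by positivity) (hbulk (u / 2) u (by linarith) (by linarith))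
    refine ⟨v, ⟨by linarith [hv.1], hv.2⟩, hv.1, hEv.trans_eq ?_⟩
    rw [hvol, show 1 - s = -s + 1 by ring, Real.rpow_add_one ha.ne']
    field_simp

theorem energy_le_of_bulk_bound (hs : 0 ≤ s) (hC : 0 ≤ C) (hA : 0 ≤ A) (hE : Measurable E)
    (hbulk : ∀ u₁ u₂, 1 ≤ u₁ → u₁ ≤ u₂ →
      ∫⁻ u in Icc u₁ u₂, ENNReal.ofReal (E u) ≤ ENNReal.ofReal (C * A * u₁ ^ (1 - s)))
    (hprop : ∀ u₁ u₂, 1 ≤ u₁ → u₁ ≤ u₂ → E u₂ ≤ C * (E u₁ + A * u₁ ^ (-s)))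
    (h1 : E 1 ≤ C * A) {u : ℝ} (hu : 1 ≤ u) :
    E u ≤ 2 ^ s * C * (C + 1) * A * u ^ (-s) := by
  obtain ⟨v, hv, huv, hEv⟩ :=
    exists_energy_le_on_dyadic_interval hs hE hbulk (mul_nonneg hC hA) h1 hu
  have hv_rpow : v ^ (-s) ≤ (u / 2) ^ (-s) :=
    Real.rpow_le_rpow_of_nonpos (by linarith) huv (by linarith)
  have half_rpow : (u / 2) ^ (-s) = 2 ^ s * u ^ (-s) := by
    rw [Real.div_rpow (by linarith) zero_le_two, Real.rpow_neg zero_le_two, div_inv_eq_mul,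
      mul_comm]
  calc E u ≤ C * (E v + A * v ^ (-s)) := hprop v u hv.1 hv.2
    _ ≤ C * (C * A * (u / 2) ^ (-s) + A * (u / 2) ^ (-s)) := by gcongr
    _ = 2 ^ s * C * (C + 1) * A * u ^ (-s) := by rw [half_rpow]; ring

end DyadicDecay

theorem dyadic_second_lemma_general (s C : ℝ) (hs1 : 1 < s) (hC : 1 ≤ C) :
    ∃ C' : ℝ, 0 < C' ∧
      ∀ (ε₀ : ℝ), 0 ≤ ε₀ →
      ∀ (E : ℝ → ℝ) (B F : ℝ → ℝ → ℝ → ℝ),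
      (∀ u, 1 ≤ u → 0 ≤ E u) →
      Measurable E →
      (∀ p ∈ Set.Icc (0:ℝ) 1, ∀ u₁ u₂, 1 ≤ u₁ → u₁ ≤ u₂ →
        0 ≤ B p u₁ u₂ ∧ 0 ≤ F p u₁ u₂) →
      -- (a) established weighted bulk/flux decay for p ∈ [0,1]
      (∀ p ∈ Set.Icc (0:ℝ) 1, ∀ u₁ u₂, 1 ≤ u₁ → u₁ ≤ u₂ →
        B p u₁ u₂ + F p u₁ u₂ ≤ C * ε₀ ^ 2 * u₁ ^ (p - s)) →
      -- (b) the p = 1 bulk dominates the integral of the energy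
      (∀ u₁ u₂, 1 ≤ u₁ → u₁ ≤ u₂ →
        ∫⁻ u in Set.Icc u₁ u₂, ENNReal.ofReal (E u)
          ≤ ENNReal.ofReal (B 1 u₁ u₂)) →
      -- (c) one-sided energy propagation
      (∀ u₁ u₂, 1 ≤ u₁ → u₁ ≤ u₂ → E u₂ ≤ C * (E u₁ + ε₀ ^ 2 * u₁ ^ (-s))) →
      -- (d) initial smallness
      E 1 ≤ C * ε₀ ^ 2 →
      -- conclusions
      (∀ u, 1 ≤ u → E u ≤ C' * ε₀ ^ 2 * u ^ (-s)) ∧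
      (∀ u₁ u₂, 1 ≤ u₁ → u₁ ≤ u₂ → ∀ u ∈ Set.Icc u₁ u₂,
        B 0 u₁ u₂ + E u + F 0 u₁ u₂ ≤ C' * ε₀ ^ 2 * u₁ ^ (-s)) := by
  refine ⟨2 ^ s * C * (C + 1) + C, by positivity, ?_⟩
  intro ε₀ _ E B F _ hE hBF ha hb hc hd
  have hbulk : ∀ u₁ u₂, 1 ≤ u₁ → u₁ ≤ u₂ → ∫⁻ u in Icc u₁ u₂, ENNReal.ofReal (E u) ≤
      ENNReal.ofReal (C * ε₀ ^ 2 * u₁ ^ (1 - s)) := fun u₁ u₂ h₁ h₁₂ =>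
    (hb u₁ u₂ h₁ h₁₂).trans <| ENNReal.ofReal_le_ofReal <| by
      linarith [ha 1 ⟨zero_le_one, le_rfl⟩ u₁ u₂ h₁ h₁₂,
        (hBF 1 ⟨zero_le_one, le_rfl⟩ u₁ u₂ h₁ h₁₂).2]
  have decay : ∀ u, 1 ≤ u → E u ≤ 2 ^ s * C * (C + 1) * ε₀ ^ 2 * u ^ (-s) := fun u hu =>
    energy_le_of_bulk_bound (by linarith) (by linarith) (sq_nonneg ε₀) hE hbulk hc hd hu
  refine ⟨fun u hu => (decay u hu).trans ?_, fun u₁ u₂ h₁ h₁₂ u hu => ?_⟩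
  · gcongr
    linarith
  · have hEu : E u ≤ 2 ^ s * C * (C + 1) * ε₀ ^ 2 * u₁ ^ (-s) :=
      (decay u (h₁.trans hu.1)).trans <| by
        gcongr _ * ?_
        exact Real.rpow_le_rpow_of_nonpos (by linarith) hu.1 (by linarith)
    have hBF₀ := ha 0 ⟨le_rfl, zero_le_one⟩ u₁ u₂ h₁ h₁₂
    rw [zero_sub] at hBF₀
    linear_combination hBF₀ + hEu

/-- Abstract second dyadic lemma for `r^p`-weighted estimates in the interior region.
Given `s ∈ (1,2]`, `C ≥ 1`, `ε₀ ≥ 0`, a measurable nonnegative energy `E(u)` and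
nonnegative `B(p,u₁,u₂)`, `F(p,u₁,u₂)` (for `p ∈ [0,1]`, `1 ≤ u₁ ≤ u₂`) with:
(a) `B(p,u₁,u₂) + F(p,u₁,u₂) ≤ C ε₀² u₁^{p−s}`;
(b) `B(1,u₁,u₂) ≥ ∫_{u₁}^{u₂} E(u) du`;
(c) `E(u₂) ≤ C (E(u₁) + ε₀² u₁^{−s})`;
(d) `E(1) ≤ C ε₀²`;
then there is `C'` depending only on `s` and `C` with `E(u) ≤ C' ε₀² u^{−s}` for
all `u ≥ 1`, and consequently
`B(0,u₁,u₂) + sup_{u∈[u₁,u₂]} E(u) + F(0,u₁,u₂) ≤ C' ε₀² u₁^{−s}` for all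
`1 ≤ u₁ ≤ u₂` (the supremum being expressed by quantifying over `u ∈ [u₁,u₂]`). -/
theorem dyadic_second_lemma (s C : ℝ) (hs1 : 1 < s) (hs2 : s ≤ 2) (hC : 1 ≤ C) :
    ∃ C' : ℝ, 0 < C' ∧
      ∀ (ε₀ : ℝ), 0 ≤ ε₀ →
      ∀ (E : ℝ → ℝ) (B F : ℝ → ℝ → ℝ → ℝ),
      (∀ u, 1 ≤ u → 0 ≤ E u) →
      Measurable E →
      (∀ p ∈ Set.Icc (0:ℝ) 1, ∀ u₁ u₂, 1 ≤ u₁ → u₁ ≤ u₂ →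
        0 ≤ B p u₁ u₂ ∧ 0 ≤ F p u₁ u₂) →
      -- (a) established weighted bulk/flux decay for p ∈ [0,1]
      (∀ p ∈ Set.Icc (0:ℝ) 1, ∀ u₁ u₂, 1 ≤ u₁ → u₁ ≤ u₂ →
        B p u₁ u₂ + F p u₁ u₂ ≤ C * ε₀ ^ 2 * u₁ ^ (p - s)) →
      -- (b) the p = 1 bulk dominates the integral of the energy
      (∀ u₁ u₂, 1 ≤ u₁ → u₁ ≤ u₂ →
        ∫⁻ u in Set.Icc u₁ u₂, ENNReal.ofReal (E u)
          ≤ ENNReal.ofReal (B 1 u₁ u₂)) →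
      -- (c) one-sided energy propagation
      (∀ u₁ u₂, 1 ≤ u₁ → u₁ ≤ u₂ → E u₂ ≤ C * (E u₁ + ε₀ ^ 2 * u₁ ^ (-s))) →
      -- (d) initial smallness
      E 1 ≤ C * ε₀ ^ 2 →
      -- conclusions
      (∀ u, 1 ≤ u → E u ≤ C' * ε₀ ^ 2 * u ^ (-s)) ∧
      (∀ u₁ u₂, 1 ≤ u₁ → u₁ ≤ u₂ → ∀ u ∈ Set.Icc u₁ u₂,
        B 0 u₁ u₂ + E u + F 0 u₁ u₂ ≤ C' * ε₀ ^ 2 * u₁ ^ (-s)) :=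
  dyadic_second_lemma_general s C hs1 hC
end

section
/- Let s ∈ (1,2] and let p, p₁, p₂, ℓ ∈ ℝ with p ≤ s, p₁ ≤ s, p₂ ≤ s, ℓ ≤ s and 2p < p₁ + p₂ + ℓ + 1. Let ε ≥ 0, T ≥ 2 and u₀ ≤ 1. Set ⟨u⟩ := √(1+u²) and r(t,u) := t + |u|. Let f, g : [2,T] × (−∞,u₀] → [0,∞) be measurable and assume that for every u ≤ u₀: ∫_2^T r(t,u)^{p₁} f(t,u)² dt ≤ ε² ⟨u⟩^{p₁−s} and ∫_2^T r(t,u)^{p₂} g(t,u)² dt ≤ ε² ⟨u⟩^{p₂−s}. Then there is a constant C depending only on s, p, p₁, p₂, ℓ such that ∫_{−∞}^{u₀} ∫_2^T r(t,u)^{p−(ℓ+1)/2} ⟨u⟩^{−(s−ℓ)/2} f(t,u) g(t,u) dt du ≤ C · ε² · ⟨u₀⟩^{p−s}. -/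
/-!
On the cone `u = const` we have `r = t + |u| ≥ ⟨u⟩`, and by `2p < p₁ + p₂ + ℓ + 1` the weight
`r^(p-(ℓ+1)/2)` is `r^((p₁+p₂)/2)` times a negative power of `r`, which is at most its value at
`r = ⟨u⟩`. Cauchy–Schwarz in `t` against the two fluxes then bounds the inner integral by
`ε² ⟨u⟩^(p-s-(s+1)/2)`. For `u ≤ u₀ ≤ 1` we have `⟨u₀⟩ ≤ √2 ⟨u⟩`, so
`⟨u⟩^(p-s) ≤ √2^(s-p) ⟨u₀⟩^(p-s)` since `p ≤ s`, and the remaining factor `⟨u⟩^(-(s+1)/2)` is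
integrable on `ℝ` because `s > 1`.
-/

open MeasureTheory ENNReal Set

theorem ENNReal.lintegral_mul_le_of_sq_le {α : Type*} [MeasurableSpace α] {μ : Measure α}
    {F G : α → ℝ≥0∞} (hF : AEMeasurable F μ) (hG : AEMeasurable G μ) {a b : ℝ≥0∞}
    (ha : ∫⁻ x, F x ^ 2 ∂μ ≤ a ^ 2) (hb : ∫⁻ x, G x ^ 2 ∂μ ≤ b ^ 2) :
    ∫⁻ x, F x * G x ∂μ ≤ a * b := by
  have sqrt_le {I c : ℝ≥0∞} (h : I ≤ c ^ 2) : I ^ (1 / 2 : ℝ) ≤ c := by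
    calc I ^ (1 / 2 : ℝ) ≤ (c ^ 2) ^ ((2 : ℕ)⁻¹ : ℝ) := by
          rw [one_div, ← Nat.cast_ofNat]; exact ENNReal.rpow_le_rpow h (by positivity)
      _ = c := pow_rpow_inv_natCast two_ne_zero c
  calc ∫⁻ x, F x * G x ∂μ
      ≤ (∫⁻ x, F x ^ (2:ℝ) ∂μ) ^ (1 / 2 : ℝ) * (∫⁻ x, G x ^ (2:ℝ) ∂μ) ^ (1 / 2 : ℝ) :=
        lintegral_mul_le_Lp_mul_Lq μ Real.HolderConjugate.two_two hF hG
    _ ≤ a * b := by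
        simp only [ENNReal.rpow_two]
        exact mul_le_mul' (sqrt_le ha) (sqrt_le hb)

theorem Real.rpow_half_sq {x : ℝ} (hx : 0 ≤ x) (y : ℝ) : (x ^ (y / 2)) ^ 2 = x ^ y := by
  rw [← Real.rpow_natCast, ← Real.rpow_mul hx]
  norm_num

theorem setLIntegral_rpow_mul_mul_le {α : Type*} [MeasurableSpace α] {μ : Measure α}
    {S : Set α} {r F G : α → ℝ} {A a p₁ p₂ M₁ M₂ : ℝ} (hS : MeasurableSet S) (hr : Measurable r)
    (hFm : Measurable F) (hGm : Measurable G) (hA : 0 < A) (ha : 2 * a ≤ p₁ + p₂)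
    (hAr : ∀ x ∈ S, A ≤ r x) (hF0 : ∀ x ∈ S, 0 ≤ F x) (hG0 : ∀ x ∈ S, 0 ≤ G x)
    (hM₁ : 0 ≤ M₁) (hM₂ : 0 ≤ M₂)
    (hF : ∫⁻ x in S, ENNReal.ofReal (r x ^ p₁ * F x ^ 2) ∂μ ≤ ENNReal.ofReal (M₁ ^ 2))
    (hG : ∫⁻ x in S, ENNReal.ofReal (r x ^ p₂ * G x ^ 2) ∂μ ≤ ENNReal.ofReal (M₂ ^ 2)) :
    ∫⁻ x in S, ENNReal.ofReal (r x ^ a * F x * G x) ∂μ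
      ≤ ENNReal.ofReal (A ^ (a - (p₁ + p₂) / 2) * M₁ * M₂) := by
  set K := A ^ (a - (p₁ + p₂) / 2)
  have hK : 0 ≤ K := Real.rpow_nonneg hA.le _
  have pointwise : ∀ x ∈ S, ENNReal.ofReal (r x ^ a * F x * G x)
      ≤ ENNReal.ofReal K * (ENNReal.ofReal (r x ^ (p₁ / 2) * F x)
          * ENNReal.ofReal (r x ^ (p₂ / 2) * G x)) := by
    intro x hx
    have hrx : 0 < r x := hA.trans_le (hAr x hx)
    have hFG : 0 ≤ r x ^ (p₁ / 2) * F x * (r x ^ (p₂ / 2) * G x) := by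
      have := hF0 x hx; have := hG0 x hx; positivity
    rw [← ENNReal.ofReal_mul' (mul_nonneg (Real.rpow_nonneg hrx.le _) (hG0 x hx)),
      ← ENNReal.ofReal_mul hK]
    refine ENNReal.ofReal_le_ofReal ?_
    calc r x ^ a * F x * G x
        = r x ^ (a - (p₁ + p₂) / 2) * (r x ^ (p₁ / 2) * F x * (r x ^ (p₂ / 2) * G x)) := by
          rw [show a = a - (p₁ + p₂) / 2 + p₁ / 2 + p₂ / 2 by ring,
            Real.rpow_add hrx, Real.rpow_add hrx]
          ring_nf
      _ ≤ K * (r x ^ (p₁ / 2) * F x * (r x ^ (p₂ / 2) * G x)) :=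
          mul_le_mul_of_nonneg_right
            (Real.rpow_le_rpow_of_nonpos hA (hAr x hx) (by linarith)) hFG
  have flux_sq {p : ℝ} {H : α → ℝ} {M : ℝ} (hH0 : ∀ x ∈ S, 0 ≤ H x) (hM : 0 ≤ M)
      (hH : ∫⁻ x in S, ENNReal.ofReal (r x ^ p * H x ^ 2) ∂μ ≤ ENNReal.ofReal (M ^ 2)) :
      ∫⁻ x in S, ENNReal.ofReal (r x ^ (p / 2) * H x) ^ 2 ∂μ ≤ ENNReal.ofReal M ^ 2 := by
    rw [← ENNReal.ofReal_pow hM]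
    refine le_of_eq_of_le (setLIntegral_congr_fun hS fun x hx => ?_) hH
    have hrx : 0 ≤ r x := hA.le.trans (hAr x hx)
    rw [← ENNReal.ofReal_pow (mul_nonneg (Real.rpow_nonneg hrx _) (hH0 x hx)), mul_pow,
      Real.rpow_half_sq hrx]
  calc ∫⁻ x in S, ENNReal.ofReal (r x ^ a * F x * G x) ∂μ
      ≤ ∫⁻ x in S, ENNReal.ofReal K * (ENNReal.ofReal (r x ^ (p₁ / 2) * F x)
          * ENNReal.ofReal (r x ^ (p₂ / 2) * G x)) ∂μ := setLIntegral_mono' hS pointwise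
    _ = ENNReal.ofReal K * ∫⁻ x in S, ENNReal.ofReal (r x ^ (p₁ / 2) * F x)
          * ENNReal.ofReal (r x ^ (p₂ / 2) * G x) ∂μ := lintegral_const_mul' _ _ ofReal_ne_top
    _ ≤ ENNReal.ofReal K * (ENNReal.ofReal M₁ * ENNReal.ofReal M₂) := by
        gcongr
        exact ENNReal.lintegral_mul_le_of_sq_le (by fun_prop) (by fun_prop)
          (flux_sq hF0 hM₁ hF) (flux_sq hG0 hM₂ hG)
    _ = ENNReal.ofReal (K * M₁ * M₂) := by
        rw [ENNReal.ofReal_mul (mul_nonneg hK hM₁), ENNReal.ofReal_mul hK, mul_assoc]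

theorem one_le_sqrt_one_add_sq (u : ℝ) : 1 ≤ √(1 + u ^ 2) :=
  Real.one_le_sqrt.mpr (by nlinarith [sq_nonneg u])

theorem sqrt_one_add_sq_le_add_abs {t : ℝ} (ht : 1 ≤ t) (u : ℝ) : √(1 + u ^ 2) ≤ t + |u| :=
  Real.sqrt_le_iff.mpr ⟨by positivity, by nlinarith [abs_nonneg u, sq_abs u]⟩

theorem sqrt_one_add_sq_le_sqrt_two_mul {u u₀ : ℝ} (hu : u ≤ u₀) (hu₀ : u₀ ≤ 1) :
    √(1 + u₀ ^ 2) ≤ √2 * √(1 + u ^ 2) := by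
  rw [← Real.sqrt_mul zero_le_two]
  refine Real.sqrt_le_sqrt ?_
  rcases le_or_gt u₀ 0 with h | h
  · nlinarith [mul_nonneg (sub_nonneg.mpr hu) (by linarith : (0:ℝ) ≤ -u₀ - u)]
  · nlinarith

theorem sqrt_one_add_sq_rpow_le {u u₀ γ : ℝ} (hu : u ≤ u₀) (hu₀ : u₀ ≤ 1) (hγ : γ ≤ 0) :
    √(1 + u ^ 2) ^ γ ≤ √2 ^ (-γ) * √(1 + u₀ ^ 2) ^ γ := by
  have hlow : √(1 + u₀ ^ 2) / √2 ≤ √(1 + u ^ 2) := by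
    rw [div_le_iff₀' (by positivity)]; exact sqrt_one_add_sq_le_sqrt_two_mul hu hu₀
  calc √(1 + u ^ 2) ^ γ ≤ (√(1 + u₀ ^ 2) / √2) ^ γ :=
        Real.rpow_le_rpow_of_nonpos (by positivity) hlow hγ
    _ = √2 ^ (-γ) * √(1 + u₀ ^ 2) ^ γ := by
        rw [Real.div_rpow (by positivity) (by positivity), Real.rpow_neg (by positivity),
          div_eq_inv_mul]

theorem sqrt_one_add_sq_rpow_eq (u β : ℝ) : √(1 + u ^ 2) ^ β = (1 + u ^ 2) ^ (β / 2) := by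
  rw [Real.sqrt_eq_rpow, ← Real.rpow_mul (by positivity)]
  ring_nf

theorem integrable_sqrt_one_add_sq_rpow_neg {β : ℝ} (hβ : 1 < β) :
    Integrable fun u : ℝ => √(1 + u ^ 2) ^ (-β) := by
  simpa [sqrt_one_add_sq_rpow_eq, neg_div] using
    integrable_rpow_neg_one_add_norm_sq (E := ℝ) (μ := volume) (by simpa using hβ)

theorem integral_sqrt_one_add_sq_rpow_neg_pos {β : ℝ} (hβ : 1 < β) :
    0 < ∫ u : ℝ, √(1 + u ^ 2) ^ (-β) :=
  integral_pos_of_integrable_nonneg_nonzero (x := 0)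
    ((Real.continuous_sqrt.comp (by fun_prop)).rpow_const fun u =>
      Or.inl (zero_lt_one.trans_le (one_le_sqrt_one_add_sq u)).ne')
    (integrable_sqrt_one_add_sq_rpow_neg hβ) (fun _ => by positivity) (by simp)

theorem setLIntegral_Iic_sqrt_one_add_sq_rpow_le {β γ u₀ : ℝ} (hβ : 1 < β) (hγ : γ ≤ 0)
    (hu₀ : u₀ ≤ 1) :
    ∫⁻ u in Iic u₀, ENNReal.ofReal (√(1 + u ^ 2) ^ (γ - β))
      ≤ ENNReal.ofReal (√2 ^ (-γ) * (∫ u : ℝ, √(1 + u ^ 2) ^ (-β)) * √(1 + u₀ ^ 2) ^ γ) := by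
  set K := √2 ^ (-γ) * √(1 + u₀ ^ 2) ^ γ
  have hK : 0 ≤ K := by positivity
  have pointwise : ∀ u ∈ Iic u₀, ENNReal.ofReal (√(1 + u ^ 2) ^ (γ - β))
      ≤ ENNReal.ofReal K * ENNReal.ofReal (√(1 + u ^ 2) ^ (-β)) := fun u hu => by
    rw [← ENNReal.ofReal_mul hK, sub_eq_add_neg, Real.rpow_add (by positivity)]
    exact ENNReal.ofReal_le_ofReal (mul_le_mul_of_nonneg_right
      (sqrt_one_add_sq_rpow_le hu hu₀ hγ) (by positivity))
  calc ∫⁻ u in Iic u₀, ENNReal.ofReal (√(1 + u ^ 2) ^ (γ - β))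
      ≤ ∫⁻ u in Iic u₀, ENNReal.ofReal K * ENNReal.ofReal (√(1 + u ^ 2) ^ (-β)) :=
        setLIntegral_mono' measurableSet_Iic pointwise
    _ ≤ ∫⁻ u, ENNReal.ofReal K * ENNReal.ofReal (√(1 + u ^ 2) ^ (-β)) :=
        setLIntegral_le_lintegral _ _
    _ = ENNReal.ofReal K * ENNReal.ofReal (∫ u : ℝ, √(1 + u ^ 2) ^ (-β)) := by
        rw [lintegral_const_mul' _ _ ofReal_ne_top, ofReal_integral_eq_lintegral_ofReal
          (integrable_sqrt_one_add_sq_rpow_neg hβ) (ae_of_all _ fun _ => by positivity)]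
    _ = _ := by
        rw [← ENNReal.ofReal_mul hK]
        congr 1
        ring

theorem lintegral_flux_product_le {s p p₁ p₂ ℓ ε T u : ℝ} (hlt : 2 * p < p₁ + p₂ + ℓ + 1)
    {f g : ℝ → ℝ} (hfm : Measurable f) (hgm : Measurable g)
    (hf0 : ∀ t ∈ Icc (2:ℝ) T, 0 ≤ f t) (hg0 : ∀ t ∈ Icc (2:ℝ) T, 0 ≤ g t)
    (hF : ∫⁻ t in Icc (2:ℝ) T, ENNReal.ofReal ((t + |u|) ^ p₁ * f t ^ 2)
      ≤ ENNReal.ofReal (ε ^ 2 * √(1 + u ^ 2) ^ (p₁ - s)))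
    (hG : ∫⁻ t in Icc (2:ℝ) T, ENNReal.ofReal ((t + |u|) ^ p₂ * g t ^ 2)
      ≤ ENNReal.ofReal (ε ^ 2 * √(1 + u ^ 2) ^ (p₂ - s))) :
    ∫⁻ t in Icc (2:ℝ) T, ENNReal.ofReal ((t + |u|) ^ (p - (ℓ + 1) / 2)
        * √(1 + u ^ 2) ^ (-((s - ℓ) / 2)) * f t * g t)
      ≤ ENNReal.ofReal (ε ^ 2 * √(1 + u ^ 2) ^ (p - s - (s + 1) / 2)) := by
  set A := √(1 + u ^ 2)
  have hA : 0 < A := zero_lt_one.trans_le (one_le_sqrt_one_add_sq u)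
  have flux_eq (p' : ℝ) : ε ^ 2 * A ^ (p' - s) = (|ε| * A ^ ((p' - s) / 2)) ^ 2 := by
    rw [mul_pow, sq_abs, Real.rpow_half_sq hA.le]
  have hw : 0 ≤ A ^ (-((s - ℓ) / 2)) := by positivity
  calc ∫⁻ t in Icc (2:ℝ) T, ENNReal.ofReal ((t + |u|) ^ (p - (ℓ + 1) / 2)
        * A ^ (-((s - ℓ) / 2)) * f t * g t)
      = ENNReal.ofReal (A ^ (-((s - ℓ) / 2))) * ∫⁻ t in Icc (2:ℝ) T,
          ENNReal.ofReal ((t + |u|) ^ (p - (ℓ + 1) / 2) * f t * g t) := by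
        rw [← lintegral_const_mul' _ _ ofReal_ne_top]
        congr 1 with t
        rw [← ENNReal.ofReal_mul hw]
        ring_nf
    _ ≤ ENNReal.ofReal (A ^ (-((s - ℓ) / 2))) * ENNReal.ofReal
          (A ^ (p - (ℓ + 1) / 2 - (p₁ + p₂) / 2) * (|ε| * A ^ ((p₁ - s) / 2))
            * (|ε| * A ^ ((p₂ - s) / 2))) := by
        gcongr
        refine setLIntegral_rpow_mul_mul_le measurableSet_Icc (by fun_prop) hfm hgm hA
          (by linarith) (fun t ht => sqrt_one_add_sq_le_add_abs (by linarith [ht.1]) u)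
          hf0 hg0 (by positivity) (by positivity) ?_ ?_
        · rwa [← flux_eq]
        · rwa [← flux_eq]
    _ = ENNReal.ofReal (ε ^ 2 * A ^ (p - s - (s + 1) / 2)) := by
        rw [← ENNReal.ofReal_mul hw]
        congr 1
        rw [show p - s - (s + 1) / 2 = -((s - ℓ) / 2) + (p - (ℓ + 1) / 2 - (p₁ + p₂) / 2)
            + (p₁ - s) / 2 + (p₂ - s) / 2 by ring,
          Real.rpow_add hA, Real.rpow_add hA, Real.rpow_add hA, ← sq_abs ε]
        ring

theorem exterior_error_estimate_EE_general (s p p₁ p₂ ℓ : ℝ) (hs1 : 1 < s)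
    (hp : p ≤ s) (hlt : 2 * p < p₁ + p₂ + ℓ + 1) :
    ∃ C : ℝ, 0 < C ∧
      ∀ (ε T u₀ : ℝ), 0 ≤ ε → 2 ≤ T → u₀ ≤ 1 →
      ∀ f g : ℝ → ℝ → ℝ,
        Measurable (Function.uncurry f) → Measurable (Function.uncurry g) →
        (∀ t ∈ Set.Icc (2:ℝ) T, ∀ u ≤ u₀, 0 ≤ f t u) →
        (∀ t ∈ Set.Icc (2:ℝ) T, ∀ u ≤ u₀, 0 ≤ g t u) →
        (∀ u ≤ u₀, ∫⁻ t in Set.Icc (2:ℝ) T,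
            ENNReal.ofReal ((t + |u|) ^ p₁ * f t u ^ 2)
          ≤ ENNReal.ofReal (ε ^ 2 * Real.sqrt (1 + u ^ 2) ^ (p₁ - s))) →
        (∀ u ≤ u₀, ∫⁻ t in Set.Icc (2:ℝ) T,
            ENNReal.ofReal ((t + |u|) ^ p₂ * g t u ^ 2)
          ≤ ENNReal.ofReal (ε ^ 2 * Real.sqrt (1 + u ^ 2) ^ (p₂ - s))) →
        ∫⁻ u in Set.Iic u₀, ∫⁻ t in Set.Icc (2:ℝ) T,
            ENNReal.ofReal ((t + |u|) ^ (p - (ℓ + 1) / 2)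
              * Real.sqrt (1 + u ^ 2) ^ (-((s - ℓ) / 2)) * f t u * g t u)
          ≤ ENNReal.ofReal (C * ε ^ 2 * Real.sqrt (1 + u₀ ^ 2) ^ (p - s)) := by
  have hβ : 1 < (s + 1) / 2 := by linarith
  refine ⟨√2 ^ (s - p) * ∫ u : ℝ, √(1 + u ^ 2) ^ (-((s + 1) / 2)),
    mul_pos (by positivity) (integral_sqrt_one_add_sq_rpow_neg_pos hβ), ?_⟩
  intro ε T u₀ _ _ hu₀ f g hfm hgm hf0 hg0 hF hG
  calc ∫⁻ u in Iic u₀, ∫⁻ t in Icc (2:ℝ) T, ENNReal.ofReal ((t + |u|) ^ (p - (ℓ + 1) / 2)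
          * √(1 + u ^ 2) ^ (-((s - ℓ) / 2)) * f t u * g t u)
      ≤ ∫⁻ u in Iic u₀, ENNReal.ofReal (ε ^ 2)
          * ENNReal.ofReal (√(1 + u ^ 2) ^ (p - s - (s + 1) / 2)) :=
        setLIntegral_mono' measurableSet_Iic fun u hu =>
          (lintegral_flux_product_le hlt hfm.of_uncurry_right hgm.of_uncurry_right
            (fun t ht => hf0 t ht u hu) (fun t ht => hg0 t ht u hu) (hF u hu) (hG u hu)).trans_eq
            (ENNReal.ofReal_mul (sq_nonneg ε))
    _ = ENNReal.ofReal (ε ^ 2) * ∫⁻ u in Iic u₀,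
          ENNReal.ofReal (√(1 + u ^ 2) ^ (p - s - (s + 1) / 2)) :=
        lintegral_const_mul' _ _ ofReal_ne_top
    _ ≤ ENNReal.ofReal (ε ^ 2) * ENNReal.ofReal (√2 ^ (-(p - s))
          * (∫ u : ℝ, √(1 + u ^ 2) ^ (-((s + 1) / 2))) * √(1 + u₀ ^ 2) ^ (p - s)) := by
        gcongr
        exact setLIntegral_Iic_sqrt_one_add_sq_rpow_le hβ (by linarith) hu₀
    _ = _ := by
        rw [← ENNReal.ofReal_mul (sq_nonneg ε), neg_sub]
        ring_nf

/-- Flat model of the exterior-region nonlinear error estimate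
`𝒩_p¹[𝔼_{p₁}, 𝕆_ℓ·𝔼_{p₂}](ᵉV) ≲ ε³⟨u⟩^{−(s−p)}` (case (1) of the Appendix theorem),
here stated with two `ε`-size flux factors. With `⟨u⟩ = √(1+u²)`, `r(t,u) = t+|u|`:
if for every `u ≤ u₀` the null-cone fluxes satisfy
`∫_2^T r^{p₁} f² dt ≤ ε²⟨u⟩^{p₁−s}` and `∫_2^T r^{p₂} g² dt ≤ ε²⟨u⟩^{p₂−s}`, then
`∫_{−∞}^{u₀} ∫_2^T r^{p−(ℓ+1)/2} ⟨u⟩^{−(s−ℓ)/2} f g dt du ≤ C ε² ⟨u₀⟩^{p−s}`,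
with `C` depending only on `s, p, p₁, p₂, ℓ`, provided `2p < p₁+p₂+ℓ+1`. -/
theorem exterior_error_estimate_EE (s p p₁ p₂ ℓ : ℝ) (hs1 : 1 < s) (hs2 : s ≤ 2)
    (hp : p ≤ s) (hp₁ : p₁ ≤ s) (hp₂ : p₂ ≤ s) (hℓ : ℓ ≤ s)
    (hlt : 2 * p < p₁ + p₂ + ℓ + 1) :
    ∃ C : ℝ, 0 < C ∧
      ∀ (ε T u₀ : ℝ), 0 ≤ ε → 2 ≤ T → u₀ ≤ 1 →
      ∀ f g : ℝ → ℝ → ℝ,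
        Measurable (Function.uncurry f) → Measurable (Function.uncurry g) →
        (∀ t ∈ Set.Icc (2:ℝ) T, ∀ u ≤ u₀, 0 ≤ f t u) →
        (∀ t ∈ Set.Icc (2:ℝ) T, ∀ u ≤ u₀, 0 ≤ g t u) →
        (∀ u ≤ u₀, ∫⁻ t in Set.Icc (2:ℝ) T,
            ENNReal.ofReal ((t + |u|) ^ p₁ * f t u ^ 2)
          ≤ ENNReal.ofReal (ε ^ 2 * Real.sqrt (1 + u ^ 2) ^ (p₁ - s))) →
        (∀ u ≤ u₀, ∫⁻ t in Set.Icc (2:ℝ) T,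
            ENNReal.ofReal ((t + |u|) ^ p₂ * g t u ^ 2)
          ≤ ENNReal.ofReal (ε ^ 2 * Real.sqrt (1 + u ^ 2) ^ (p₂ - s))) →
        ∫⁻ u in Set.Iic u₀, ∫⁻ t in Set.Icc (2:ℝ) T,
            ENNReal.ofReal ((t + |u|) ^ (p - (ℓ + 1) / 2)
              * Real.sqrt (1 + u ^ 2) ^ (-((s - ℓ) / 2)) * f t u * g t u)
          ≤ ENNReal.ofReal (C * ε ^ 2 * Real.sqrt (1 + u₀ ^ 2) ^ (p - s)) :=
  exterior_error_estimate_EE_general s p p₁ p₂ ℓ hs1 hp hlt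
end

section
/- Let s ∈ (1,2], let p₁ ∈ [0,s], and let p ∈ ℝ with p₁/2 ≤ p ≤ s and 2p + 1 < p₁ + 2s. Let ε ≥ 0 and 1 ≤ u₁ ≤ u₂. Set D := {(t,u) ∈ ℝ² : u₁ ≤ u ≤ u₂ and u ≤ t ≤ 2u} and r(t,u) := t − u. Let F : D → [0,∞) be measurable with ∫_{{u : (t,u)∈D}} r(t,u)^{p₁} F(t,u)² du ≤ ε² u₁^{p₁−s} for every t, and let a : D → [0,∞) satisfy a(t,u) ≤ ε² t^{−(s+1)} for all (t,u) ∈ D. Then there is a constant C depending only on s, p, p₁ such that ∫∫_D r(t,u)^p F(t,u) a(t,u) dt du ≤ C · ε³ · u₁^{p−s}. -/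
/-!
On a time slice `t`, Cauchy–Schwarz in `u` splits `r ^ p F = (r ^ (p₁/2) F) · r ^ (p - p₁/2)`:
the first factor is controlled by the flux bound and the second by `r ≤ t` and
`|{u : (t, u) ∈ D}| ≤ t`. With `a ≤ ε² t^(-(s+1))` the slice contributes at most
`ε³ u₁^((p₁-s)/2) t^(-γ-1)`, where `γ = s + p₁/2 - p - 1/2 > 0` is exactly `2p + 1 < p₁ + 2s`.
Integrating over `t ≥ u₁` (Tonelli) gives `γ⁻¹ ε³ u₁^((p₁-s)/2 - γ)`, and
`(p₁-s)/2 - γ ≤ p - s` because `s ≥ 1`.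
-/

open MeasureTheory Set ENNReal

theorem ENNReal.rpow_half_le_of_le_sq {Z W : ℝ≥0∞} (h : Z ≤ W ^ 2) : Z ^ (1 / 2 : ℝ) ≤ W :=
  calc Z ^ (1 / 2 : ℝ) ≤ (W ^ 2) ^ (1 / 2 : ℝ) := ENNReal.rpow_le_rpow h (by norm_num)
    _ = W := by rw [← ENNReal.rpow_natCast, ← ENNReal.rpow_mul]; norm_num

theorem ENNReal.lintegral_mul_le_of_lintegral_sq_le {α : Type*} [MeasurableSpace α]
    {μ : Measure α} {f g : α → ℝ≥0∞} (hf : AEMeasurable f μ) (hg : AEMeasurable g μ)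
    {X Y : ℝ≥0∞} (hfX : ∫⁻ a, f a ^ 2 ∂μ ≤ X ^ 2) (hgY : ∫⁻ a, g a ^ 2 ∂μ ≤ Y ^ 2) :
    ∫⁻ a, f a * g a ∂μ ≤ X * Y := by
  have := ENNReal.lintegral_mul_le_Lp_mul_Lq μ Real.HolderConjugate.two_two hf hg
  simp only [Pi.mul_apply, ENNReal.rpow_two] at this
  exact this.trans (mul_le_mul' (rpow_half_le_of_le_sq hfX) (rpow_half_le_of_le_sq hgY))

theorem ENNReal.ofReal_rpow_sq {r a : ℝ} (hr : 0 ≤ r) :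
    ENNReal.ofReal (r ^ a) ^ 2 = ENNReal.ofReal (r ^ (2 * a)) := by
  rw [← ENNReal.ofReal_pow (by positivity), ← Real.rpow_natCast, ← Real.rpow_mul hr, mul_comm]
  norm_num

theorem ENNReal.ofReal_rpow_mul_sq {r a b : ℝ} (hr : 0 ≤ r) (hb : 0 ≤ b) :
    ENNReal.ofReal (r ^ a * b) ^ 2 = ENNReal.ofReal (r ^ (2 * a) * b ^ 2) := by
  rw [ENNReal.ofReal_mul (by positivity), mul_pow, ENNReal.ofReal_rpow_sq hr,
    ← ENNReal.ofReal_pow hb, ← ENNReal.ofReal_mul (by positivity)]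

theorem setLIntegral_sub_rpow_le {S : Set ℝ} {t α : ℝ} (ht : 0 ≤ t) (hα : 0 ≤ α)
    (hS : S ⊆ Icc 0 t) : ∫⁻ u in S, ENNReal.ofReal ((t - u) ^ α) ≤ ENNReal.ofReal (t ^ (α + 1)) :=
  calc ∫⁻ u in S, ENNReal.ofReal ((t - u) ^ α)
      ≤ ∫⁻ u in Icc 0 t, ENNReal.ofReal ((t - u) ^ α) := lintegral_mono_set hS
    _ ≤ ∫⁻ _ in Icc 0 t, ENNReal.ofReal (t ^ α) := setLIntegral_mono' measurableSet_Icc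
        fun u hu => ENNReal.ofReal_le_ofReal <|
          Real.rpow_le_rpow (sub_nonneg.2 hu.2) (by linarith [hu.1]) hα
    _ = ENNReal.ofReal (t ^ (α + 1)) := by
        rw [setLIntegral_const, Real.volume_Icc, sub_zero, ← ENNReal.ofReal_mul (by positivity),
          Real.rpow_add' ht (by positivity), Real.rpow_one]

theorem setLIntegral_sub_rpow_mul_le {S : Set ℝ} {t p q X : ℝ} {φ : ℝ → ℝ}
    (hφ : Measurable φ) (hS : MeasurableSet S) (hSt : S ⊆ Icc 0 t) (hφ0 : ∀ u ∈ S, 0 ≤ φ u)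
    (ht : 0 ≤ t) (hq : 0 ≤ q) (hqp : q / 2 ≤ p) (hX : 0 ≤ X)
    (hflux : ∫⁻ u in S, ENNReal.ofReal ((t - u) ^ q * φ u ^ 2) ≤ ENNReal.ofReal (X ^ 2)) :
    ∫⁻ u in S, ENNReal.ofReal ((t - u) ^ p * φ u)
      ≤ ENNReal.ofReal (X * t ^ (p - q / 2 + 1 / 2)) := by
  have hr : ∀ u ∈ S, 0 ≤ t - u := fun u hu => sub_nonneg.2 (hSt hu).2
  have hsplit : EqOn (fun u => ENNReal.ofReal ((t - u) ^ p * φ u))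
      (fun u => ENNReal.ofReal ((t - u) ^ (q / 2) * φ u)
        * ENNReal.ofReal ((t - u) ^ (p - q / 2))) S := fun u hu => by
    dsimp only
    rw [← ENNReal.ofReal_mul (mul_nonneg (Real.rpow_nonneg (hr u hu) _) (hφ0 u hu)),
      mul_right_comm, ← Real.rpow_add_of_nonneg (hr u hu) (by positivity) (by linarith),
      add_sub_cancel]
  rw [setLIntegral_congr_fun hS hsplit, ENNReal.ofReal_mul hX]
  refine ENNReal.lintegral_mul_le_of_lintegral_sq_le (by fun_prop) (by fun_prop) ?_ ?_
  · rw [setLIntegral_congr_fun hS fun u hu => ENNReal.ofReal_rpow_mul_sq (hr u hu) (hφ0 u hu),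
      ← ENNReal.ofReal_pow hX]
    simpa only [mul_div_cancel₀ q two_ne_zero] using hflux
  · rw [setLIntegral_congr_fun hS fun u hu => ENNReal.ofReal_rpow_sq (hr u hu),
      ENNReal.ofReal_rpow_sq ht, show 2 * (p - q / 2 + 1 / 2) = 2 * (p - q / 2) + 1 by ring]
    exact setLIntegral_sub_rpow_le ht (by linarith) hSt

theorem setLIntegral_setLIntegral_swap {α β : Type*} [MeasurableSpace α] [MeasurableSpace β]
    {μ : Measure α} {ν : Measure β} [SFinite μ] [SFinite ν] {s : Set α} {t : α → Set β}
    (hs : MeasurableSet s) (hst : MeasurableSet {z : α × β | z.1 ∈ s ∧ z.2 ∈ t z.1})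
    {f : α → β → ℝ≥0∞} (hf : Measurable (Function.uncurry f)) :
    ∫⁻ x in s, ∫⁻ y in t x, f x y ∂ν ∂μ = ∫⁻ y, ∫⁻ x in {x | x ∈ s ∧ y ∈ t x}, f x y ∂μ ∂ν := by
  set E := {z : α × β | z.1 ∈ s ∧ z.2 ∈ t z.1}
  calc ∫⁻ x in s, ∫⁻ y in t x, f x y ∂ν ∂μ
      = ∫⁻ x, ∫⁻ y, E.indicator (Function.uncurry f) (x, y) ∂ν ∂μ := by
        rw [← lintegral_indicator hs]
        refine lintegral_congr fun x => ?_
        by_cases hx : x ∈ s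
        · have hsec : Prod.mk x ⁻¹' E = t x := by ext y; simp [E, hx]
          rw [indicator_of_mem hx, ← hsec, ← lintegral_indicator (measurable_prodMk_left hst)]
          rfl
        · simp [E, hx]
    _ = ∫⁻ y, ∫⁻ x, E.indicator (Function.uncurry f) (x, y) ∂μ ∂ν :=
        lintegral_lintegral_swap (hf.indicator hst).aemeasurable
    _ = ∫⁻ y, ∫⁻ x in {x | x ∈ s ∧ y ∈ t x}, f x y ∂μ ∂ν := by
        refine lintegral_congr fun y => ?_
        rw [← lintegral_indicator (s := {x | x ∈ s ∧ y ∈ t x}) (measurable_prodMk_right hst)]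
        rfl

theorem lintegral_Ici_rpow_neg_sub_one {a γ : ℝ} (ha : 0 < a) (hγ : 0 < γ) :
    ∫⁻ t in Ici a, ENNReal.ofReal (t ^ (-γ - 1)) = ENNReal.ofReal (a ^ (-γ) / γ) := by
  rw [setLIntegral_congr Ioi_ae_eq_Ici.symm, ← ofReal_integral_eq_lintegral_ofReal
    (integrableOn_Ioi_rpow_of_lt (by linarith) ha), integral_Ioi_rpow_of_lt (by linarith) ha]
  · rw [sub_add_cancel, neg_div_neg_eq]
  · filter_upwards [self_mem_ae_restrict measurableSet_Ioi] with t ht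
    exact Real.rpow_nonneg (ha.trans ht).le _

theorem setLIntegral_flux_mul_decay_le {S : Set ℝ} {t s p p₁ ε u₁ : ℝ} {φ : ℝ → ℝ}
    (hφ : Measurable φ) (hS : MeasurableSet S) (hSt : S ⊆ Icc 0 t) (hφ0 : ∀ u ∈ S, 0 ≤ φ u)
    (ht : 0 < t) (hp₁ : 0 ≤ p₁) (hp₁p : p₁ / 2 ≤ p) (hε : 0 ≤ ε) (hu₁ : 0 ≤ u₁)
    (hflux : ∫⁻ u in S, ENNReal.ofReal ((t - u) ^ p₁ * φ u ^ 2)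
      ≤ ENNReal.ofReal (ε ^ 2 * u₁ ^ (p₁ - s))) :
    ∫⁻ u in S, ENNReal.ofReal ((t - u) ^ p * φ u * (ε ^ 2 * t ^ (-(s + 1))))
      ≤ ENNReal.ofReal (ε ^ 3 * u₁ ^ ((p₁ - s) / 2))
        * ENNReal.ofReal (t ^ (-(s + p₁ / 2 - p - 1 / 2) - 1)) := by
  have hX : ε ^ 2 * u₁ ^ (p₁ - s) = (ε * u₁ ^ ((p₁ - s) / 2)) ^ 2 := by
    rw [mul_pow, ← Real.rpow_mul_natCast hu₁]
    norm_num
  have hc : 0 ≤ ε ^ 2 * t ^ (-(s + 1)) := by positivity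
  calc ∫⁻ u in S, ENNReal.ofReal ((t - u) ^ p * φ u * (ε ^ 2 * t ^ (-(s + 1))))
      = (∫⁻ u in S, ENNReal.ofReal ((t - u) ^ p * φ u))
          * ENNReal.ofReal (ε ^ 2 * t ^ (-(s + 1))) := by
        simp_rw [ENNReal.ofReal_mul' hc]
        exact lintegral_mul_const' _ _ ENNReal.ofReal_ne_top
    _ ≤ ENNReal.ofReal (ε * u₁ ^ ((p₁ - s) / 2) * t ^ (p - p₁ / 2 + 1 / 2))
          * ENNReal.ofReal (ε ^ 2 * t ^ (-(s + 1))) := by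
        gcongr
        exact setLIntegral_sub_rpow_mul_le hφ hS hSt hφ0 ht.le hp₁ hp₁p (by positivity) (hX ▸ hflux)
    _ = ENNReal.ofReal (ε ^ 3 * u₁ ^ ((p₁ - s) / 2))
          * ENNReal.ofReal (t ^ (-(s + p₁ / 2 - p - 1 / 2) - 1)) := by
        rw [← ENNReal.ofReal_mul (by positivity), ← ENNReal.ofReal_mul (by positivity),
          show -(s + p₁ / 2 - p - 1 / 2) - 1 = (p - p₁ / 2 + 1 / 2) + -(s + 1) by ring,
          Real.rpow_add ht (p - p₁ / 2 + 1 / 2)]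
        congr 1
        ring

theorem setLIntegral_interior_slice_le {s p p₁ ε u₁ u₂ : ℝ} {F : ℝ → ℝ → ℝ}
    (hFm : Measurable (Function.uncurry F))
    (hF0 : ∀ t u, u₁ ≤ u → u ≤ u₂ → u ≤ t → t ≤ 2 * u → 0 ≤ F t u)
    (hflux : ∀ t : ℝ, ∫⁻ u in {u : ℝ | u₁ ≤ u ∧ u ≤ u₂ ∧ u ≤ t ∧ t ≤ 2 * u},
        ENNReal.ofReal ((t - u) ^ p₁ * F t u ^ 2) ≤ ENNReal.ofReal (ε ^ 2 * u₁ ^ (p₁ - s)))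
    (hp₁ : 0 ≤ p₁) (hp₁p : p₁ / 2 ≤ p) (hε : 0 ≤ ε) (hu₁ : 0 < u₁) (t : ℝ) :
    ∫⁻ u in {u : ℝ | u₁ ≤ u ∧ u ≤ u₂ ∧ u ≤ t ∧ t ≤ 2 * u},
        ENNReal.ofReal ((t - u) ^ p * F t u * (ε ^ 2 * t ^ (-(s + 1))))
      ≤ (Ici u₁).indicator (fun t => ENNReal.ofReal (ε ^ 3 * u₁ ^ ((p₁ - s) / 2))
          * ENNReal.ofReal (t ^ (-(s + p₁ / 2 - p - 1 / 2) - 1))) t := by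
  by_cases ht : u₁ ≤ t
  · rw [indicator_of_mem (mem_Ici.2 ht)]
    exact setLIntegral_flux_mul_decay_le (hFm.comp measurable_prodMk_left) (by measurability)
      (fun u hu => ⟨by linarith [hu.1], hu.2.2.1⟩)
      (fun u hu => hF0 t u hu.1 hu.2.1 hu.2.2.1 hu.2.2.2) (by linarith) hp₁ hp₁p hε hu₁.le
      (hflux t)
  · have hempty : {u : ℝ | u₁ ≤ u ∧ u ≤ u₂ ∧ u ≤ t ∧ t ≤ 2 * u} = ∅ :=
      eq_empty_of_forall_notMem fun u hu => ht (hu.1.trans hu.2.2.1)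
    simp [hempty, ht]

theorem interior_error_estimate_FE_general (s p p₁ : ℝ) (hs1 : 1 < s)
    (hp₁0 : 0 ≤ p₁) (hplow : p₁ / 2 ≤ p)
    (hlt : 2 * p + 1 < p₁ + 2 * s) :
    ∃ C : ℝ, 0 < C ∧
      ∀ (ε u₁ u₂ : ℝ), 0 ≤ ε → 1 ≤ u₁ → u₁ ≤ u₂ →
      ∀ F a : ℝ → ℝ → ℝ,
        Measurable (Function.uncurry F) →
        (∀ t u, u₁ ≤ u → u ≤ u₂ → u ≤ t → t ≤ 2 * u → 0 ≤ F t u) →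
        (∀ t u, u₁ ≤ u → u ≤ u₂ → u ≤ t → t ≤ 2 * u → 0 ≤ a t u) →
        (∀ t u, u₁ ≤ u → u ≤ u₂ → u ≤ t → t ≤ 2 * u →
          a t u ≤ ε ^ 2 * t ^ (-(s + 1))) →
        (∀ t : ℝ, ∫⁻ u in {u : ℝ | u₁ ≤ u ∧ u ≤ u₂ ∧ u ≤ t ∧ t ≤ 2 * u},
            ENNReal.ofReal ((t - u) ^ p₁ * F t u ^ 2)
          ≤ ENNReal.ofReal (ε ^ 2 * u₁ ^ (p₁ - s))) →
        ∫⁻ u in Set.Icc u₁ u₂, ∫⁻ t in Set.Icc u (2 * u),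
            ENNReal.ofReal ((t - u) ^ p * F t u * a t u)
          ≤ ENNReal.ofReal (C * ε ^ 3 * u₁ ^ (p - s)) := by
  set γ := s + p₁ / 2 - p - 1 / 2 with hγ_def
  have hγ : 0 < γ := by linarith
  refine ⟨γ⁻¹, inv_pos.2 hγ, fun ε u₁ u₂ hε hu₁ _ F a hFm hF0 _ habd hflux => ?_⟩
  have hexp : ε ^ 3 * u₁ ^ ((p₁ - s) / 2) * (u₁ ^ (-γ) / γ) ≤ γ⁻¹ * ε ^ 3 * u₁ ^ (p - s) :=
    calc ε ^ 3 * u₁ ^ ((p₁ - s) / 2) * (u₁ ^ (-γ) / γ)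
        = γ⁻¹ * ε ^ 3 * u₁ ^ ((p₁ - s) / 2 + -γ) := by rw [Real.rpow_add (by linarith)]; ring
      _ ≤ γ⁻¹ * ε ^ 3 * u₁ ^ (p - s) := by gcongr; linarith
  calc ∫⁻ u in Icc u₁ u₂, ∫⁻ t in Icc u (2 * u), ENNReal.ofReal ((t - u) ^ p * F t u * a t u)
      ≤ ∫⁻ u in Icc u₁ u₂, ∫⁻ t in Icc u (2 * u),
          ENNReal.ofReal ((t - u) ^ p * F t u * (ε ^ 2 * t ^ (-(s + 1)))) :=
        setLIntegral_mono' measurableSet_Icc fun u hu => setLIntegral_mono' measurableSet_Icc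
          fun t ht => ENNReal.ofReal_le_ofReal <| mul_le_mul_of_nonneg_left
            (habd t u hu.1 hu.2 ht.1 ht.2) (mul_nonneg (Real.rpow_nonneg (by linarith [ht.1]) _)
              (hF0 t u hu.1 hu.2 ht.1 ht.2))
    _ = ∫⁻ t, ∫⁻ u in {u | u₁ ≤ u ∧ u ≤ u₂ ∧ u ≤ t ∧ t ≤ 2 * u},
          ENNReal.ofReal ((t - u) ^ p * F t u * (ε ^ 2 * t ^ (-(s + 1)))) := by
        rw [setLIntegral_setLIntegral_swap measurableSet_Icc (by measurability) (by fun_prop)]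
        simp only [mem_Icc, and_assoc]
    _ ≤ _ := lintegral_mono <|
        setLIntegral_interior_slice_le hFm hF0 hflux hp₁0 hplow hε (by linarith)
    _ = ENNReal.ofReal (ε ^ 3 * u₁ ^ ((p₁ - s) / 2)) * ENNReal.ofReal (u₁ ^ (-γ) / γ) := by
        rw [lintegral_indicator measurableSet_Ici, lintegral_const_mul' _ _ ENNReal.ofReal_ne_top,
          lintegral_Ici_rpow_neg_sub_one (by linarith) hγ]
    _ ≤ ENNReal.ofReal (γ⁻¹ * ε ^ 3 * u₁ ^ (p - s)) := by
        rw [← ENNReal.ofReal_mul (by positivity)]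
        exact ENNReal.ofReal_le_ofReal hexp

/-- Flat model of the interior-region nonlinear error estimate
`𝒩_p¹[𝔽_{p₁}, 𝕆_ℓ·𝔼_{p₂}](ⁱᵢV)` near the symmetry axis.
On `D = {(t,u) : u₁ ≤ u ≤ u₂, u ≤ t ≤ 2u}` with `r = t−u`:
if for every `t` the hypersurface flux satisfies
`∫_{{u : (t,u)∈D}} r^{p₁} F² du ≤ ε² u₁^{p₁−s}` and `a ≤ ε² t^{−(s+1)}` on `D`,
then `∫∫_D r^p F a dt du ≤ C ε³ u₁^{p−s}` with `C` depending only on `s, p, p₁`,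
provided `p₁ ∈ [0,s]`, `p₁/2 ≤ p ≤ s` and `2p+1 < p₁+2s`. -/
theorem interior_error_estimate_FE (s p p₁ : ℝ) (hs1 : 1 < s) (hs2 : s ≤ 2)
    (hp₁0 : 0 ≤ p₁) (hp₁s : p₁ ≤ s) (hplow : p₁ / 2 ≤ p) (hps : p ≤ s)
    (hlt : 2 * p + 1 < p₁ + 2 * s) :
    ∃ C : ℝ, 0 < C ∧
      ∀ (ε u₁ u₂ : ℝ), 0 ≤ ε → 1 ≤ u₁ → u₁ ≤ u₂ →
      ∀ F a : ℝ → ℝ → ℝ,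
        Measurable (Function.uncurry F) →
        (∀ t u, u₁ ≤ u → u ≤ u₂ → u ≤ t → t ≤ 2 * u → 0 ≤ F t u) →
        (∀ t u, u₁ ≤ u → u ≤ u₂ → u ≤ t → t ≤ 2 * u → 0 ≤ a t u) →
        (∀ t u, u₁ ≤ u → u ≤ u₂ → u ≤ t → t ≤ 2 * u →
          a t u ≤ ε ^ 2 * t ^ (-(s + 1))) →
        (∀ t : ℝ, ∫⁻ u in {u : ℝ | u₁ ≤ u ∧ u ≤ u₂ ∧ u ≤ t ∧ t ≤ 2 * u},
            ENNReal.ofReal ((t - u) ^ p₁ * F t u ^ 2)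
          ≤ ENNReal.ofReal (ε ^ 2 * u₁ ^ (p₁ - s))) →
        ∫⁻ u in Set.Icc u₁ u₂, ∫⁻ t in Set.Icc u (2 * u),
            ENNReal.ofReal ((t - u) ^ p * F t u * a t u)
          ≤ ENNReal.ofReal (C * ε ^ 3 * u₁ ^ (p - s)) :=
  interior_error_estimate_FE_general s p p₁ hs1 hp₁0 hplow hlt
end
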